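/- Let G be a simple bipartite graph with e edges, bipartition (U,V), |U| = p, |V| = q, and degree sequences d_1 ≥ ... ≥ d_p on U and d'_1 ≥ ... ≥ d'_q on V. Then ρ(G) ≤ sqrt((2e − (p·d_p + q·d'_q − d_p·d'_q) + sqrt((p·d_p + q·d'_q − d_p·d'_q)² − 4·d_p·d'_q·(pq − e)))/2). -/
import Mathlib

open Matrix

noncomputable def specRad {V : Type*} [Fintype V] (G : SimpleGraph V) : ℝ :=
  letI := Classical.decEq V
  letI := Classical.decRel G.Adj
  sSup (spectrum ℝ (G.adjMatrix ℝ))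

/-- If a nonnegative matrix `M` satisfies `M *ᵥ c ≤ t • c` entrywise for a positive
vector `c`, then any eigenvalue of `M` has absolute value at most `t`. -/
lemma eigAbsBound {n : Type*} [Fintype n] (M : Matrix n n ℝ)
    (hM : ∀ i j, 0 ≤ M i j) (c : n → ℝ) (hc : ∀ i, 0 < c i) (t : ℝ)
    (hrow : ∀ i, (M *ᵥ c) i ≤ t * c i) {μ : ℝ} {v : n → ℝ} (hv : v ≠ 0)
    (hev : M *ᵥ v = μ • v) : |μ| ≤ t := by
  have hmv : ∀ (N : Matrix n n ℝ) (f : n → ℝ) (i : n), (N *ᵥ f) i = ∑ j, N i j * f j :=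
    fun _ _ _ => rfl
  obtain ⟨j0, hj0⟩ := Function.ne_iff.mp hv
  obtain ⟨i, -, hi⟩ := Finset.exists_max_image Finset.univ (fun j => |v j| / c j)
    ⟨j0, Finset.mem_univ _⟩
  have h1 : 0 < |v i| / c i :=
    lt_of_lt_of_le (div_pos (abs_pos.mpr hj0) (hc j0)) (hi j0 (Finset.mem_univ _))
  have hvi : 0 < |v i| := by
    by_contra h
    push_neg at h
    rw [le_antisymm h (abs_nonneg _), zero_div] at h1
    exact lt_irrefl 0 h1
  have hle : ∀ j, |v j| ≤ |v i| / c i * c j := fun j =>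
    (div_le_iff₀ (hc j)).mp (hi j (Finset.mem_univ _))
  have h2 : (M *ᵥ v) i = μ * v i := by rw [hev]; rfl
  have hci : c i ≠ 0 := ne_of_gt (hc i)
  have hmu : |μ| * |v i| ≤ t * |v i| := by
    calc |μ| * |v i| = |∑ j, M i j * v j| := by rw [← abs_mul, ← h2, hmv]
      _ ≤ ∑ j, |M i j * v j| := Finset.abs_sum_le_sum_abs _ _
      _ = ∑ j, M i j * |v j| := by
          refine Finset.sum_congr rfl fun j _ => ?_
          rw [abs_mul, abs_of_nonneg (hM i j)]
      _ ≤ ∑ j, M i j * (|v i| / c i * c j) := by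
          refine Finset.sum_le_sum fun j _ => ?_
          exact mul_le_mul_of_nonneg_left (hle j) (hM i j)
      _ = (|v i| / c i) * ∑ j, M i j * c j := by
          rw [Finset.mul_sum]
          exact Finset.sum_congr rfl fun j _ => by ring
      _ = (|v i| / c i) * (M *ᵥ c) i := by rw [hmv]
      _ ≤ (|v i| / c i) * (t * c i) := by
          apply mul_le_mul_of_nonneg_left (hrow i)
          positivity
      _ = t * |v i| := by field_simp
  exact le_of_mul_le_mul_right hmu hvi

/-- Any member of the spectrum of a real matrix admits an eigenvector. -/
lemma specEig {n : Type*} [Fintype n] [DecidableEq n] {M : Matrix n n ℝ} {μ : ℝ}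
    (h : μ ∈ spectrum ℝ M) : ∃ v : n → ℝ, v ≠ 0 ∧ M *ᵥ v = μ • v := by
  have h' : μ ∈ spectrum ℝ (Matrix.toLinAlgEquiv' M) := by
    rwa [AlgEquiv.spectrum_eq Matrix.toLinAlgEquiv' M]
  have h2 : Module.End.HasEigenvalue (Matrix.toLinAlgEquiv' M) μ :=
    Module.End.hasEigenvalue_iff_mem_spectrum.mpr h'
  obtain ⟨v, hv⟩ := h2.exists_hasEigenvector
  refine ⟨v, hv.2, ?_⟩
  have h3 := hv.apply_eq_smul
  rwa [Matrix.toLinAlgEquiv'_apply] at h3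

/-- If `(B*B) *ᵥ c ≤ t • c` entrywise for a positive vector `c` and nonnegative `B`,
then every element of the real spectrum of `B` is at most `√t`. -/
lemma rowBoundSpec {n : Type*} [Fintype n] [DecidableEq n] (B : Matrix n n ℝ)
    (hB : ∀ i j, 0 ≤ B i j) (c : n → ℝ) (hc : ∀ i, 0 < c i) (t : ℝ)
    (hrow : ∀ i, ((B * B) *ᵥ c) i ≤ t * c i) {μ : ℝ} (hμ : μ ∈ spectrum ℝ B) :
    μ ≤ Real.sqrt t := by
  obtain ⟨v, hv0, hev⟩ := specEig hμ
  have hev2 : (B * B) *ᵥ v = (μ ^ 2) • v := by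
    rw [← Matrix.mulVec_mulVec, hev, Matrix.mulVec_smul, hev, smul_smul, ← sq]
  have hBB : ∀ i j, 0 ≤ (B * B) i j := fun i j => by
    rw [Matrix.mul_apply]
    exact Finset.sum_nonneg fun k _ => mul_nonneg (hB i k) (hB k j)
  have habs := eigAbsBound (B * B) hBB c hc t hrow hv0 hev2
  have h1 : μ ^ 2 ≤ t := le_trans (le_abs_self _) habs
  calc μ ≤ |μ| := le_abs_self μ
    _ = Real.sqrt (μ ^ 2) := (Real.sqrt_sq_eq_abs μ).symm
    _ ≤ Real.sqrt t := Real.sqrt_le_sqrt h1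


private lemma aux_D_nonneg (p q e dp dq : ℝ) (hdp0 : 0 ≤ dp) (hdq0 : 0 ≤ dq)
    (hdq_le_p : dq ≤ p) (heqq : q * dq ≤ e) :
    0 ≤ (p * dp + q * dq - dp * dq) ^ 2 - 4 * dp * dq * (p * q - e) := by
  nlinarith [sq_nonneg (q * dq - dp * (p - dq)),
    mul_le_mul_of_nonneg_left (show p * q - e ≤ q * (p - dq) by nlinarith)
      (mul_nonneg hdp0 hdq0)]

private lemma aux_lt1 (p q e dp dq : ℝ) (hdp_pos : 0 < dp) (hdq_pos : 0 < dq)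
    (he' : q * dq < e) :
    (p * dp + q * dq - dp * dq - 2 * (q * dq)) ^ 2
      < (p * dp + q * dq - dp * dq) ^ 2 - 4 * dp * dq * (p * q - e) := by
  nlinarith [mul_pos (mul_pos hdp_pos hdq_pos) (sub_pos.mpr he')]

private lemma aux_lt2 (p q e dp dq : ℝ) (hdp_pos : 0 < dp) (hdq_pos : 0 < dq)
    (he' : p * dp < e) :
    (p * dp + q * dq - dp * dq - 2 * (p * dp)) ^ 2
      < (p * dp + q * dq - dp * dq) ^ 2 - 4 * dp * dq * (p * q - e) := by
  nlinarith [mul_pos (mul_pos hdp_pos hdq_pos) (sub_pos.mpr he')]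

set_option maxHeartbeats 1000000 in
theorem stmt8 (p q e : ℕ) (hp : 0 < p) (hq : 0 < q)
    (G : SimpleGraph (Fin p ⊕ Fin q)) [DecidableRel G.Adj]
    (hL : ∀ i j : Fin p, ¬ G.Adj (Sum.inl i) (Sum.inl j))
    (hR : ∀ i j : Fin q, ¬ G.Adj (Sum.inr i) (Sum.inr j))
    (hdU : ∀ i j : Fin p, i ≤ j → G.degree (Sum.inl j) ≤ G.degree (Sum.inl i))
    (hdV : ∀ i j : Fin q, i ≤ j → G.degree (Sum.inr j) ≤ G.degree (Sum.inr i))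
    (hcard : G.edgeFinset.card = e)
    (dp dq : ℝ)
    (hdp : dp = (G.degree (Sum.inl ⟨p - 1, by omega⟩) : ℝ))
    (hdq : dq = (G.degree (Sum.inr ⟨q - 1, by omega⟩) : ℝ)) :
    specRad G ≤ Real.sqrt ((2 * (e : ℝ) - ((p : ℝ) * dp + (q : ℝ) * dq - dp * dq)
      + Real.sqrt (((p : ℝ) * dp + (q : ℝ) * dq - dp * dq)^2
        - 4 * dp * dq * ((p : ℝ) * (q : ℝ) - (e : ℝ)))) / 2) := by
  classical
  set A := G.adjMatrix ℝ with hA_def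
  have hmv : ∀ (N : Matrix (Fin p ⊕ Fin q) (Fin p ⊕ Fin q) ℝ) (f : _ → ℝ) (z),
      (N *ᵥ f) z = ∑ w, N z w * f w := fun _ _ _ => rfl
  have hA01 : ∀ z w, A z w = if G.Adj z w then (1 : ℝ) else 0 := fun z w => by
    rw [hA_def, SimpleGraph.adjMatrix_apply]
  have hAnn : ∀ z w, 0 ≤ A z w := fun z w => by
    rw [hA01]; split <;> norm_num
  have hAle1 : ∀ z w, A z w ≤ 1 := fun z w => by
    rw [hA01]; split <;> norm_num
  have hAsymm : ∀ z w, A z w = A w z := fun z w => by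
    rw [hA01, hA01]; simp [SimpleGraph.adj_comm]
  have hAUU : ∀ i i', A (Sum.inl i) (Sum.inl i') = 0 := fun i i' => by
    rw [hA01]; simp [hL i i']
  have hAVV : ∀ j j', A (Sum.inr j) (Sum.inr j') = 0 := fun j j' => by
    rw [hA01]; simp [hR j j']
  set dg : (Fin p ⊕ Fin q) → ℝ := fun z => (G.degree z : ℝ) with hdg_def
  have hdg_nn : ∀ z, 0 ≤ dg z := fun z => by rw [hdg_def]; positivity
  have hdeg : ∀ z, ∑ w, A z w = dg z := by
    intro z
    have h : ∑ w, A z w = ((Finset.univ.filter (G.Adj z)).card : ℝ) := by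
      simp [hA01, Finset.sum_boole]
    rw [h, hdg_def]
    congr 1
    rw [SimpleGraph.degree, SimpleGraph.neighborFinset_eq_filter]
  have hdegU : ∀ i, ∑ j, A (Sum.inl i) (Sum.inr j) = dg (Sum.inl i) := by
    intro i
    have h := hdeg (Sum.inl i)
    rw [Fintype.sum_sum_type] at h
    simpa [hAUU] using h
  have hdegV : ∀ w, ∑ i, A (Sum.inr w) (Sum.inl i) = dg (Sum.inr w) := by
    intro w
    have h := hdeg (Sum.inr w)
    rw [Fintype.sum_sum_type] at h
    simpa [hAVV] using h
  have htot : ∑ z, dg z = 2 * (e : ℝ) := by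
    have h := G.sum_degrees_eq_twice_card_edges
    rw [hcard] at h
    have h2 : ∑ z, dg z = ((∑ z, G.degree z : ℕ) : ℝ) := by
      push_cast
      exact Finset.sum_congr rfl fun z _ => by rw [hdg_def]
    rw [h2, h]; push_cast; ring
  have hUVsum : ∑ i, dg (Sum.inl i) = ∑ j, dg (Sum.inr j) := by
    calc ∑ i, dg (Sum.inl i) = ∑ i, ∑ j, A (Sum.inl i) (Sum.inr j) :=
          Finset.sum_congr rfl fun i _ => (hdegU i).symm
      _ = ∑ j, ∑ i, A (Sum.inl i) (Sum.inr j) := Finset.sum_comm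
      _ = ∑ j, ∑ i, A (Sum.inr j) (Sum.inl i) :=
          Finset.sum_congr rfl fun j _ => Finset.sum_congr rfl fun i _ => hAsymm _ _
      _ = ∑ j, dg (Sum.inr j) := Finset.sum_congr rfl fun j _ => hdegV j
  have hsplit := Fintype.sum_sum_type dg
  have heV : ∑ j, dg (Sum.inr j) = (e : ℝ) := by
    rw [hsplit] at htot; linarith [hUVsum]
  have heU : ∑ i, dg (Sum.inl i) = (e : ℝ) := by linarith [hUVsum]
  have hbV : ∀ j, dq ≤ dg (Sum.inr j) := by
    intro j
    have hj := j.isLt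
    have h := hdV j ⟨q - 1, by omega⟩ (by rw [Fin.le_def]; simp; omega)
    rw [hdq]
    show ((G.degree (Sum.inr ⟨q - 1, by omega⟩)) : ℝ) ≤ ((G.degree (Sum.inr j)) : ℝ)
    exact_mod_cast h
  have hbU : ∀ i, dp ≤ dg (Sum.inl i) := by
    intro i
    have hi := i.isLt
    have h := hdU i ⟨p - 1, by omega⟩ (by rw [Fin.le_def]; simp; omega)
    rw [hdp]
    show ((G.degree (Sum.inl ⟨p - 1, by omega⟩)) : ℝ) ≤ ((G.degree (Sum.inl i)) : ℝ)
    exact_mod_cast h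
  have hdle_p : ∀ j, dg (Sum.inr j) ≤ (p : ℝ) := by
    intro j
    rw [← hdegV j]
    calc ∑ i, A (Sum.inr j) (Sum.inl i) ≤ ∑ _i : Fin p, (1 : ℝ) :=
          Finset.sum_le_sum fun i _ => hAle1 _ _
      _ = (p : ℝ) := by simp
  have hdle_q : ∀ i, dg (Sum.inl i) ≤ (q : ℝ) := by
    intro i
    rw [← hdegU i]
    calc ∑ j, A (Sum.inl i) (Sum.inr j) ≤ ∑ _j : Fin q, (1 : ℝ) :=
          Finset.sum_le_sum fun j _ => hAle1 _ _
      _ = (q : ℝ) := by simp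
  have hdp0 : 0 ≤ dp := by rw [hdp]; positivity
  have hdq0 : 0 ≤ dq := by rw [hdq]; positivity
  have hdq_le_p : dq ≤ (p : ℝ) := le_trans (hbV ⟨q - 1, by omega⟩) (hdle_p _)
  have hdp_le_q : dp ≤ (q : ℝ) := le_trans (hbU ⟨p - 1, by omega⟩) (hdle_q _)
  have heqq : (q : ℝ) * dq ≤ (e : ℝ) := by
    have h : ∑ _j : Fin q, dq ≤ ∑ j, dg (Sum.inr j) := Finset.sum_le_sum fun j _ => hbV j
    rw [heV] at h
    simpa using h
  have hepp : (p : ℝ) * dp ≤ (e : ℝ) := by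
    have h : ∑ _i : Fin p, dp ≤ ∑ i, dg (Sum.inl i) := Finset.sum_le_sum fun i _ => hbU i
    rw [heU] at h
    simpa using h
  have hepq : (e : ℝ) ≤ (p : ℝ) * (q : ℝ) := by
    have h : ∑ j, dg (Sum.inr j) ≤ ∑ _j : Fin q, (p : ℝ) :=
      Finset.sum_le_sum fun j _ => hdle_p j
    rw [heV] at h
    simp at h
    linarith [h]
  have hF2 : ∀ i, ∑ j, A (Sum.inl i) (Sum.inr j) * dg (Sum.inr j)
      ≤ (e : ℝ) - ((q : ℝ) - dg (Sum.inl i)) * dq := by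
    intro i
    have h1 : ∑ j, (1 - A (Sum.inl i) (Sum.inr j)) * dq
        ≤ ∑ j, (1 - A (Sum.inl i) (Sum.inr j)) * dg (Sum.inr j) :=
      Finset.sum_le_sum fun j _ =>
        mul_le_mul_of_nonneg_left (hbV j) (by linarith [hAle1 (Sum.inl i) (Sum.inr j)])
    have h2 : ∑ j, (1 - A (Sum.inl i) (Sum.inr j)) * dg (Sum.inr j)
        = (e : ℝ) - ∑ j, A (Sum.inl i) (Sum.inr j) * dg (Sum.inr j) := by
      rw [← heV, ← Finset.sum_sub_distrib]
      exact Finset.sum_congr rfl fun j _ => by ring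
    have h3 : ∑ j, (1 - A (Sum.inl i) (Sum.inr j)) * dq
        = ((q : ℝ) - dg (Sum.inl i)) * dq := by
      rw [← Finset.sum_mul]
      congr 1
      rw [Finset.sum_sub_distrib, hdegU i]
      simp
    linarith
  have hF3 : ∀ w, ∑ i, A (Sum.inr w) (Sum.inl i) * dg (Sum.inl i)
      ≤ (e : ℝ) - ((p : ℝ) - dg (Sum.inr w)) * dp := by
    intro w
    have h1 : ∑ i, (1 - A (Sum.inr w) (Sum.inl i)) * dp
        ≤ ∑ i, (1 - A (Sum.inr w) (Sum.inl i)) * dg (Sum.inl i) :=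
      Finset.sum_le_sum fun i _ =>
        mul_le_mul_of_nonneg_left (hbU i) (by linarith [hAle1 (Sum.inr w) (Sum.inl i)])
    have h2 : ∑ i, (1 - A (Sum.inr w) (Sum.inl i)) * dg (Sum.inl i)
        = (e : ℝ) - ∑ i, A (Sum.inr w) (Sum.inl i) * dg (Sum.inl i) := by
      rw [← heU, ← Finset.sum_sub_distrib]
      exact Finset.sum_congr rfl fun i _ => by ring
    have h3 : ∑ i, (1 - A (Sum.inr w) (Sum.inl i)) * dp
        = ((p : ℝ) - dg (Sum.inr w)) * dp := by
      rw [← Finset.sum_mul]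
      congr 1
      rw [Finset.sum_sub_distrib, hdegV w]
      simp
    linarith
  -- abbreviations
  set S : ℝ := (p : ℝ) * dp + (q : ℝ) * dq - dp * dq with hS_def
  set D : ℝ := S ^ 2 - 4 * dp * dq * ((p : ℝ) * (q : ℝ) - (e : ℝ)) with hD_def
  have hS_nonneg : 0 ≤ S := by
    rw [hS_def]
    nlinarith [mul_nonneg hdp0 (by linarith : (0:ℝ) ≤ (p : ℝ) - dq),
      mul_nonneg (Nat.cast_nonneg (α := ℝ) q) hdq0]
  -- reduce to a spectrum bound
  have hgoalEq : specRad G = sSup (spectrum ℝ A) := by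
    unfold specRad
    rw [hA_def]
    congr!
  rw [hgoalEq]
  apply Real.sSup_le _ (Real.sqrt_nonneg _)
  intro μ hμ
  rcases eq_or_lt_of_le
      (mul_nonneg (mul_nonneg hdp0 hdq0) (by linarith : (0:ℝ) ≤ (p : ℝ) * (q : ℝ) - (e : ℝ)))
      with hc0 | hc0
  · -- degenerate case: dp*dq*(pq - e) = 0, bound is √e
    have hD' : D = S ^ 2 := by rw [hD_def]; linear_combination 4 * hc0
    have hrow : ∀ z, ((A * A) *ᵥ (fun _ => (1:ℝ))) z ≤ (e : ℝ) * (fun _ => (1:ℝ)) z := by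
      intro z
      rw [← Matrix.mulVec_mulVec, hmv]
      have hinner : ∀ k, (A *ᵥ (fun _ => (1:ℝ))) k = dg k := by
        intro k
        rw [hmv]
        simpa using hdeg k
      have hAd : ∀ k, A z k * (A *ᵥ (fun _ => (1:ℝ))) k ≤ A z k * dg k := by
        intro k; rw [hinner]
      have hstep : ∑ k, A z k * (A *ᵥ (fun _ => (1:ℝ))) k = ∑ k, A z k * dg k := by
        exact Finset.sum_congr rfl fun k _ => by rw [hinner]
      rw [hstep]
      cases z with
      | inl i =>
        rw [Fintype.sum_sum_type]
        have hz : ∑ i', A (Sum.inl i) (Sum.inl i') * dg (Sum.inl i') = 0 := by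
          simp [hAUU]
        have hb : ∑ j, A (Sum.inl i) (Sum.inr j) * dg (Sum.inr j) ≤ (e : ℝ) := by
          calc ∑ j, A (Sum.inl i) (Sum.inr j) * dg (Sum.inr j)
              ≤ ∑ j, 1 * dg (Sum.inr j) :=
                Finset.sum_le_sum fun j _ =>
                  mul_le_mul_of_nonneg_right (hAle1 _ _) (hdg_nn _)
            _ = (e : ℝ) := by rw [← heV]; exact Finset.sum_congr rfl fun j _ => one_mul _
        simp only [hz]
        simpa using hb
      | inr w =>
        rw [Fintype.sum_sum_type]
        have hz : ∑ j', A (Sum.inr w) (Sum.inr j') * dg (Sum.inr j') = 0 := by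
          simp [hAVV]
        have hb : ∑ i, A (Sum.inr w) (Sum.inl i) * dg (Sum.inl i) ≤ (e : ℝ) := by
          calc ∑ i, A (Sum.inr w) (Sum.inl i) * dg (Sum.inl i)
              ≤ ∑ i, 1 * dg (Sum.inl i) :=
                Finset.sum_le_sum fun i _ =>
                  mul_le_mul_of_nonneg_right (hAle1 _ _) (hdg_nn _)
            _ = (e : ℝ) := by rw [← heU]; exact Finset.sum_congr rfl fun i _ => one_mul _
        simp only [hz]
        simpa using hb
    have hb := rowBoundSpec A hAnn (fun _ => (1:ℝ)) (fun _ => one_pos) (e : ℝ) hrow hμ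
    rw [hD', Real.sqrt_sq hS_nonneg,
      show (2 * (e : ℝ) - S + S) / 2 = (e : ℝ) by ring]
    exact hb
  · -- main case: dp, dq > 0 and e < pq
    have hdp_pos : 0 < dp := by
      rcases lt_or_eq_of_le hdp0 with h | h
      · exact h
      · exfalso; rw [← h] at hc0; simp at hc0
    have hdq_pos : 0 < dq := by
      rcases lt_or_eq_of_le hdq0 with h | h
      · exact h
      · exfalso; rw [← h] at hc0; simp at hc0
    have hq' : (0 : ℝ) < q := by exact_mod_cast hq
    have hp' : (0 : ℝ) < p := by exact_mod_cast hp
    have hS_pos : 0 < S := by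
      rw [hS_def]
      linarith [mul_pos hq' hdq_pos, mul_nonneg hdp0 (by linarith : (0:ℝ) ≤ (p : ℝ) - dq)]
    have hD_nonneg : 0 ≤ D := by
      rw [hD_def, hS_def]
      exact aux_D_nonneg _ _ _ _ _ hdp0 hdq0 hdq_le_p heqq
    have hs2 : Real.sqrt D ^ 2 = D := Real.sq_sqrt hD_nonneg
    have hsnn : 0 ≤ Real.sqrt D := Real.sqrt_nonneg _
    have hs_lt_S : Real.sqrt D < S := by
      apply (Real.sqrt_lt' hS_pos).mpr
      rw [hD_def]
      linarith [hc0]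
    set m : ℝ := (S - Real.sqrt D) / 2 with hm_def
    have hm_pos : 0 < m := by rw [hm_def]; linarith
    have hm2 : m ^ 2 = S * m - dp * dq * ((p : ℝ) * (q : ℝ) - (e : ℝ)) := by
      rw [hm_def]
      have hD2 : Real.sqrt D ^ 2 = S ^ 2 - 4 * dp * dq * ((p : ℝ) * (q : ℝ) - (e : ℝ)) := by
        rw [hs2, hD_def]
      linear_combination (1/4 : ℝ) * hD2
    have hm_lt_qdq : m < (q : ℝ) * dq := by
      rcases lt_or_ge (S - 2 * ((q : ℝ) * dq)) 0 with hcase | hcase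
      · rw [hm_def]; linarith
      · have hcase' := hcase
        rw [hS_def] at hcase'
        have he' : (q : ℝ) * dq < (e : ℝ) := by
          linarith [hepp, mul_pos hdp_pos hdq_pos, hcase']
        have h2 : S - 2 * ((q : ℝ) * dq) < Real.sqrt D := by
          apply (Real.lt_sqrt hcase).mpr
          rw [hD_def, hS_def]
          exact aux_lt1 _ _ _ _ _ hdp_pos hdq_pos he'
        rw [hm_def]; linarith
    have hm_lt_pdp : m < (p : ℝ) * dp := by
      rcases lt_or_ge (S - 2 * ((p : ℝ) * dp)) 0 with hcase | hcase
      · rw [hm_def]; linarith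
      · have hcase' := hcase
        rw [hS_def] at hcase'
        have he' : (p : ℝ) * dp < (e : ℝ) := by
          linarith [heqq, mul_pos hdp_pos hdq_pos, hcase']
        have h2 : S - 2 * ((p : ℝ) * dp) < Real.sqrt D := by
          apply (Real.lt_sqrt hcase).mpr
          rw [hD_def, hS_def]
          exact aux_lt2 _ _ _ _ _ hdp_pos hdq_pos he'
        rw [hm_def]; linarith
    set x : ℝ := ((q : ℝ) * dq - m) / dp with hx_def
    set x' : ℝ := ((p : ℝ) * dp - m) / dq with hx'_def
    have hx_pos : 0 < x := div_pos (by linarith) hdp_pos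
    have hx'_pos : 0 < x' := div_pos (by linarith) hdq_pos
    have hdp_ne : dp ≠ 0 := ne_of_gt hdp_pos
    have hdq_ne : dq ≠ 0 := ne_of_gt hdq_pos
    have hxdp : x * dp = (q : ℝ) * dq - m := by
      rw [hx_def]; field_simp
    have hx'dq : x' * dq = (p : ℝ) * dp - m := by
      rw [hx'_def]; field_simp
    have hbig : ((q : ℝ) * dq - m) * ((p : ℝ) * dp - m) = ((e : ℝ) - m) * (dp * dq) := by
      linear_combination hm2 + m * hS_def
    have hkey : x * ((p : ℝ) * dp - m) = ((e : ℝ) - m) * dq := by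
      rw [hx_def, div_mul_eq_mul_div, hbig]
      field_simp
    have hkey' : x' * ((q : ℝ) * dq - m) = ((e : ℝ) - m) * dp := by
      rw [hx'_def, div_mul_eq_mul_div, mul_comm ((p : ℝ) * dp - m) ((q : ℝ) * dq - m), hbig]
      field_simp
    set c : (Fin p ⊕ Fin q) → ℝ :=
      Sum.elim (fun i => dg (Sum.inl i) - dp + x') (fun j => dg (Sum.inr j) - dq + x)
      with hc_def
    have hcU : ∀ i, c (Sum.inl i) = dg (Sum.inl i) - dp + x' := fun i => rfl
    have hcV : ∀ j, c (Sum.inr j) = dg (Sum.inr j) - dq + x := fun j => rfl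
    have hc_pos : ∀ z, 0 < c z := by
      intro z
      cases z with
      | inl i => rw [hcU]; have := hbU i; linarith
      | inr j => rw [hcV]; have := hbV j; linarith
    -- inner bounds
    have hinnU : ∀ i, (A *ᵥ c) (Sum.inl i) ≤ ((e : ℝ) - (q : ℝ) * dq) + x * dg (Sum.inl i) := by
      intro i
      rw [hmv, Fintype.sum_sum_type]
      have h1 : ∑ i', A (Sum.inl i) (Sum.inl i') * c (Sum.inl i') = 0 := by
        simp [hAUU]
      have h2 : ∑ j, A (Sum.inl i) (Sum.inr j) * c (Sum.inr j)
          = (∑ j, A (Sum.inl i) (Sum.inr j) * dg (Sum.inr j))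
            + (x - dq) * dg (Sum.inl i) := by
        rw [← hdegU i, Finset.mul_sum, ← Finset.sum_add_distrib]
        exact Finset.sum_congr rfl fun j _ => by rw [hcV]; ring
      rw [h1, h2]
      have h3 := hF2 i
      linarith [h3]
    have hinnV : ∀ w, (A *ᵥ c) (Sum.inr w) ≤ ((e : ℝ) - (p : ℝ) * dp) + x' * dg (Sum.inr w) := by
      intro w
      rw [hmv, Fintype.sum_sum_type]
      have h1 : ∑ j', A (Sum.inr w) (Sum.inr j') * c (Sum.inr j') = 0 := by
        simp [hAVV]
      have h2 : ∑ i, A (Sum.inr w) (Sum.inl i) * c (Sum.inl i)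
          = (∑ i, A (Sum.inr w) (Sum.inl i) * dg (Sum.inl i))
            + (x' - dp) * dg (Sum.inr w) := by
        rw [← hdegV w, Finset.mul_sum, ← Finset.sum_add_distrib]
        exact Finset.sum_congr rfl fun i _ => by rw [hcU]; ring
      rw [h1, h2]
      have h3 := hF3 w
      linarith [h3]
    -- row bounds for A²
    have hrow : ∀ z, ((A * A) *ᵥ c) z ≤ ((e : ℝ) - m) * c z := by
      intro z
      rw [← Matrix.mulVec_mulVec, hmv]
      cases z with
      | inr w =>
        rw [Fintype.sum_sum_type]
        have h0 : ∑ j', A (Sum.inr w) (Sum.inr j') * (A *ᵥ c) (Sum.inr j') = 0 := by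
          simp [hAVV]
        have h1 : ∑ i, A (Sum.inr w) (Sum.inl i) * (A *ᵥ c) (Sum.inl i)
            ≤ ∑ i, A (Sum.inr w) (Sum.inl i)
                * (((e : ℝ) - (q : ℝ) * dq) + x * dg (Sum.inl i)) :=
          Finset.sum_le_sum fun i _ =>
            mul_le_mul_of_nonneg_left (hinnU i) (hAnn _ _)
        have h2 : ∑ i, A (Sum.inr w) (Sum.inl i)
              * (((e : ℝ) - (q : ℝ) * dq) + x * dg (Sum.inl i))
            = ((e : ℝ) - (q : ℝ) * dq) * dg (Sum.inr w)
              + x * ∑ i, A (Sum.inr w) (Sum.inl i) * dg (Sum.inl i) := by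
          have hterm : ∀ i, A (Sum.inr w) (Sum.inl i)
              * (((e : ℝ) - (q : ℝ) * dq) + x * dg (Sum.inl i))
              = ((e : ℝ) - (q : ℝ) * dq) * A (Sum.inr w) (Sum.inl i)
                + x * (A (Sum.inr w) (Sum.inl i) * dg (Sum.inl i)) := fun i => by ring
          rw [Finset.sum_congr rfl fun i _ => hterm i, Finset.sum_add_distrib,
            ← Finset.mul_sum, ← Finset.mul_sum, hdegV w]
        have h3 := hF3 w
        have h4 : x * (∑ i, A (Sum.inr w) (Sum.inl i) * dg (Sum.inl i))
            ≤ x * ((e : ℝ) - ((p : ℝ) - dg (Sum.inr w)) * dp) :=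
          mul_le_mul_of_nonneg_left h3 (le_of_lt hx_pos)
        have h5 : ((e : ℝ) - (q : ℝ) * dq) * dg (Sum.inr w)
              + x * ((e : ℝ) - ((p : ℝ) - dg (Sum.inr w)) * dp)
            = ((e : ℝ) - m) * (dg (Sum.inr w) - dq + x) := by
          linear_combination (dg (Sum.inr w)) * hxdp - hkey
        rw [hcV w]
        linarith [h0, h1, h2, h4, h5]
      | inl i =>
        rw [Fintype.sum_sum_type]
        have h0 : ∑ i', A (Sum.inl i) (Sum.inl i') * (A *ᵥ c) (Sum.inl i') = 0 := by
          simp [hAUU]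
        have h1 : ∑ j, A (Sum.inl i) (Sum.inr j) * (A *ᵥ c) (Sum.inr j)
            ≤ ∑ j, A (Sum.inl i) (Sum.inr j)
                * (((e : ℝ) - (p : ℝ) * dp) + x' * dg (Sum.inr j)) :=
          Finset.sum_le_sum fun j _ =>
            mul_le_mul_of_nonneg_left (hinnV j) (hAnn _ _)
        have h2 : ∑ j, A (Sum.inl i) (Sum.inr j)
              * (((e : ℝ) - (p : ℝ) * dp) + x' * dg (Sum.inr j))
            = ((e : ℝ) - (p : ℝ) * dp) * dg (Sum.inl i)
              + x' * ∑ j, A (Sum.inl i) (Sum.inr j) * dg (Sum.inr j) := by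
          have hterm : ∀ j, A (Sum.inl i) (Sum.inr j)
              * (((e : ℝ) - (p : ℝ) * dp) + x' * dg (Sum.inr j))
              = ((e : ℝ) - (p : ℝ) * dp) * A (Sum.inl i) (Sum.inr j)
                + x' * (A (Sum.inl i) (Sum.inr j) * dg (Sum.inr j)) := fun j => by ring
          rw [Finset.sum_congr rfl fun j _ => hterm j, Finset.sum_add_distrib,
            ← Finset.mul_sum, ← Finset.mul_sum, hdegU i]
        have h3 := hF2 i
        have h4 : x' * (∑ j, A (Sum.inl i) (Sum.inr j) * dg (Sum.inr j))
            ≤ x' * ((e : ℝ) - ((q : ℝ) - dg (Sum.inl i)) * dq) :=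
          mul_le_mul_of_nonneg_left h3 (le_of_lt hx'_pos)
        have h5 : ((e : ℝ) - (p : ℝ) * dp) * dg (Sum.inl i)
              + x' * ((e : ℝ) - ((q : ℝ) - dg (Sum.inl i)) * dq)
            = ((e : ℝ) - m) * (dg (Sum.inl i) - dp + x') := by
          linear_combination (dg (Sum.inl i)) * hx'dq - hkey'
        rw [hcU i]
        linarith [h0, h1, h2, h4, h5]
    have hb := rowBoundSpec A hAnn c hc_pos ((e : ℝ) - m) hrow hμ
    rw [show (2 * (e : ℝ) - S + Real.sqrt D) / 2 = (e : ℝ) - m by rw [hm_def]; ring]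
    exact hb
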